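/- (Proposition 4: FIM of the pilot-based BPSK ISAC system.) The matrix product J_{bpsk,p}ᵀ · I_η · J_{bpsk,p} equals the 4×4 block matrix, with rows and columns each indexed by (Fin L) ⊕ (Fin L) ⊕ (Fin 1) ⊕ (Fin L), whose blocks are: (1,1) = Hᵀ·(Λ^Pττ + Λ^Dττ)·H, (1,2) = 0, (1,3) = 0, (1,4) = Hᵀ·(Λ^Pτα + Λ^Dτα); (2,1) = 0, (2,2) = 𝔟^{PD}·Hᵀ·Λφφ·H, (2,3) = 𝔟^{D}·Hᵀ·Λφφ·E, (2,4) = 0; (3,1) = 0, (3,2) = 𝔟^{D}·Eᵀ·Λφφ·H, (3,3) = 𝔟^{D}·Eᵀ·Λφφ·E, (3,4) = 0; (4,1) = (Λ^Pατ + Λ^Dατ)·H, (4,2) = 0, (4,3) = 0, (4,4) = Λ^Pαα + Λ^Dαα; where 𝔟^{PD} = Σ_{κ=0}^{P+D−1} (2πκT_f)² = 2π²·T_f²·(P+D)·(P+D−1)·(2(P+D)−1)/3 and 𝔟^{D} = Σ_{κ=P}^{P+D−1} (2πκT_f)². -/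
import Mathlib


open Matrix
open scoped ComplexOrder

noncomputable section

/-- The matrix `H`: first column all ones, agreeing with the identity elsewhere. -/
def Hmat (L : ℕ) : Matrix (Fin L) (Fin L) ℂ :=
  Matrix.of fun i j => if j.val = 0 ∨ i = j then 1 else 0

/-- The all-ones column vector `E` of length `L`. -/
def Emat (L : ℕ) : Matrix (Fin L) (Fin 1) ℂ :=
  Matrix.of fun _ _ => 1

/-- Index of the observation vector in the pilot-based systems:
pilot delays, data delays, phases, pilot amplitudes, data amplitudes. -/
abbrev PIdx (L P D : ℕ) :=
  Fin L ⊕ Fin L ⊕ (Fin (P + D) × Fin L) ⊕ Fin L ⊕ Fin L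

/-- The FIM of the observation vector in the pilot-based case. -/
def IetaP (L P D : ℕ)
    (ΛPττ ΛDττ ΛPτα ΛDτα ΛPατ ΛDατ ΛPαα ΛDαα Λφφ : Matrix (Fin L) (Fin L) ℂ) :
    Matrix (PIdx L P D) (PIdx L P D) ℂ :=
  Matrix.of fun i j =>
    match i, j with
    | Sum.inl a, Sum.inl b => ΛPττ a b
    | Sum.inr (Sum.inl a), Sum.inr (Sum.inl b) => ΛDττ a b
    | Sum.inl a, Sum.inr (Sum.inr (Sum.inr (Sum.inl b))) => ΛPτα a b
    | Sum.inr (Sum.inl a), Sum.inr (Sum.inr (Sum.inr (Sum.inr b))) => ΛDτα a b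
    | Sum.inr (Sum.inr (Sum.inr (Sum.inl a))), Sum.inl b => ΛPατ a b
    | Sum.inr (Sum.inr (Sum.inr (Sum.inr a))), Sum.inr (Sum.inl b) => ΛDατ a b
    | Sum.inr (Sum.inr (Sum.inr (Sum.inl a))), Sum.inr (Sum.inr (Sum.inr (Sum.inl b))) => ΛPαα a b
    | Sum.inr (Sum.inr (Sum.inr (Sum.inr a))), Sum.inr (Sum.inr (Sum.inr (Sum.inr b))) => ΛDαα a b
    | Sum.inr (Sum.inr (Sum.inl (κ, a))), Sum.inr (Sum.inr (Sum.inl (κ', b))) =>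
        if κ = κ' then Λφφ a b else 0
    | _, _ => 0

/-- The Jacobian matrix of the pilot-based BPSK ISAC case: row blocks `[H, 0, 0, 0]` for both
delay groups, `[0, (2πκT_f)·H, (2πκT_f)·E, 0]` for the phases with `κ ≥ P` and
`[0, (2πκT_f)·H, 0, 0]` for `κ < P`, `[0, 0, 0, I_L]` for the amplitude groups. -/
def JbpskP (L P D : ℕ) (Tf : ℝ) :
    Matrix (PIdx L P D) (Fin L ⊕ Fin L ⊕ Fin 1 ⊕ Fin L) ℂ :=
  Matrix.of fun i j =>
    match i, j with
    | Sum.inl a, Sum.inl b => Hmat L a b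
    | Sum.inr (Sum.inl a), Sum.inl b => Hmat L a b
    | Sum.inr (Sum.inr (Sum.inl (κ, a))), Sum.inr (Sum.inl b) =>
        ((2 * Real.pi * (κ.1 : ℝ) * Tf : ℝ) : ℂ) * Hmat L a b
    | Sum.inr (Sum.inr (Sum.inl (κ, a))), Sum.inr (Sum.inr (Sum.inl b)) =>
        if P ≤ κ.1 then ((2 * Real.pi * (κ.1 : ℝ) * Tf : ℝ) : ℂ) * Emat L a b else 0
    | Sum.inr (Sum.inr (Sum.inr (Sum.inl a))), Sum.inr (Sum.inr (Sum.inr b)) =>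
        (1 : Matrix (Fin L) (Fin L) ℂ) a b
    | Sum.inr (Sum.inr (Sum.inr (Sum.inr a))), Sum.inr (Sum.inr (Sum.inr b)) =>
        (1 : Matrix (Fin L) (Fin L) ℂ) a b
    | _, _ => 0

private lemma sum_range_sq_real (n : ℕ) :
    ∑ κ ∈ Finset.range n, (κ : ℝ) ^ 2 = n * (n - 1) * (2 * n - 1) / 6 := by
  induction n with
  | zero => simp
  | succ m ih => rw [Finset.sum_range_succ, ih]; push_cast; ring

private lemma ite_le_eq {α : Type*} [Zero α] {n P : ℕ} (x y : Fin n) (a : α) :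
    (if P ≤ (x : ℕ) then if x = y then a else 0 else 0)
      = if x = y then (if P ≤ (x : ℕ) then a else 0) else 0 := by
  split_ifs <;> rfl

private lemma keyC1 (P D : ℕ) (Tf : ℝ) :
    (∑ x : Fin (P + D), ((2 * Real.pi * ((x : ℕ) : ℝ) * Tf : ℝ) : ℂ) ^ 2)
      = ((2 * Real.pi ^ 2 * Tf ^ 2 * ((P : ℝ) + (D : ℝ)) * ((P : ℝ) + (D : ℝ) - 1) *
          (2 * ((P : ℝ) + (D : ℝ)) - 1) / 3 : ℝ) : ℂ) := by
  have h : ∀ x : Fin (P + D), (((2 * Real.pi * ((x : ℕ) : ℝ) * Tf : ℝ)) : ℂ) ^ 2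
      = (((2 * Real.pi * ((x : ℕ) : ℝ) * Tf) ^ 2 : ℝ) : ℂ) := fun x => by push_cast; ring
  simp_rw [h]
  rw [← Complex.ofReal_sum]
  congr 1
  rw [Fin.sum_univ_eq_sum_range (fun k => (2 * Real.pi * (k : ℝ) * Tf) ^ 2)]
  have h2 : ∀ k ∈ Finset.range (P + D), (2 * Real.pi * (k : ℝ) * Tf) ^ 2
      = 4 * Real.pi ^ 2 * Tf ^ 2 * (k : ℝ) ^ 2 := fun k _ => by ring
  rw [Finset.sum_congr rfl h2, ← Finset.mul_sum, sum_range_sq_real]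
  push_cast
  ring

private lemma keyC2 (P D : ℕ) (Tf : ℝ) :
    (∑ x : Fin (P + D),
        if P ≤ (x : ℕ) then ((2 * Real.pi * ((x : ℕ) : ℝ) * Tf : ℝ) : ℂ) ^ 2 else 0)
      = ((∑ κ ∈ Finset.Ico P (P + D), (2 * Real.pi * (κ : ℝ) * Tf) ^ 2 : ℝ) : ℂ) := by
  have h : ∀ k : ℕ, (((2 * Real.pi * (k : ℝ) * Tf : ℝ)) : ℂ) ^ 2
      = (((2 * Real.pi * (k : ℝ) * Tf) ^ 2 : ℝ) : ℂ) := fun k => by push_cast; ring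
  simp_rw [h]
  rw [Complex.ofReal_sum]
  rw [Fin.sum_univ_eq_sum_range
    (fun k => if P ≤ k then (((2 * Real.pi * (k : ℝ) * Tf) ^ 2 : ℝ) : ℂ) else 0)]
  rw [Finset.sum_ite, Finset.sum_const_zero, add_zero]
  congr 1
  ext k
  simp only [Finset.mem_filter, Finset.mem_range, Finset.mem_Ico]
  omega


set_option maxHeartbeats 1600000 in
/-- Proposition 4: the FIM of the pilot-based BPSK ISAC system, where
`𝔟^{PD} = 2π²·T_f²·(P+D)·(P+D−1)·(2(P+D)−1)/3` and `𝔟^{D} = Σ_{κ=P}^{P+D−1} (2πκT_f)²`. -/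
theorem fim_bpsk_pilot (L P D : ℕ) (hL : 1 ≤ L) (Tf : ℝ)
    (ΛPττ ΛDττ ΛPτα ΛDτα ΛPατ ΛDατ ΛPαα ΛDαα Λφφ : Matrix (Fin L) (Fin L) ℂ) :
    (JbpskP L P D Tf)ᵀ *
        IetaP L P D ΛPττ ΛDττ ΛPτα ΛDτα ΛPατ ΛDατ ΛPαα ΛDαα Λφφ * JbpskP L P D Tf =
      Matrix.of (fun (i j : Fin L ⊕ Fin L ⊕ Fin 1 ⊕ Fin L) =>
        match i, j with
        | Sum.inl a, Sum.inl b => ((Hmat L)ᵀ * (ΛPττ + ΛDττ) * Hmat L) a b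
        | Sum.inl _, Sum.inr (Sum.inl _) => 0
        | Sum.inl _, Sum.inr (Sum.inr (Sum.inl _)) => 0
        | Sum.inl a, Sum.inr (Sum.inr (Sum.inr b)) => ((Hmat L)ᵀ * (ΛPτα + ΛDτα)) a b
        | Sum.inr (Sum.inl _), Sum.inl _ => 0
        | Sum.inr (Sum.inl a), Sum.inr (Sum.inl b) =>
            ((2 * Real.pi ^ 2 * Tf ^ 2 * ((P : ℝ) + (D : ℝ)) * ((P : ℝ) + (D : ℝ) - 1) *
                (2 * ((P : ℝ) + (D : ℝ)) - 1) / 3 : ℝ) : ℂ) *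
              ((Hmat L)ᵀ * Λφφ * Hmat L) a b
        | Sum.inr (Sum.inl a), Sum.inr (Sum.inr (Sum.inl b)) =>
            ((∑ κ ∈ Finset.Ico P (P + D), (2 * Real.pi * (κ : ℝ) * Tf) ^ 2 : ℝ) : ℂ) *
              ((Hmat L)ᵀ * Λφφ * Emat L) a b
        | Sum.inr (Sum.inl _), Sum.inr (Sum.inr (Sum.inr _)) => 0
        | Sum.inr (Sum.inr (Sum.inl _)), Sum.inl _ => 0
        | Sum.inr (Sum.inr (Sum.inl a)), Sum.inr (Sum.inl b) =>
            ((∑ κ ∈ Finset.Ico P (P + D), (2 * Real.pi * (κ : ℝ) * Tf) ^ 2 : ℝ) : ℂ) *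
              ((Emat L)ᵀ * Λφφ * Hmat L) a b
        | Sum.inr (Sum.inr (Sum.inl a)), Sum.inr (Sum.inr (Sum.inl b)) =>
            ((∑ κ ∈ Finset.Ico P (P + D), (2 * Real.pi * (κ : ℝ) * Tf) ^ 2 : ℝ) : ℂ) *
              ((Emat L)ᵀ * Λφφ * Emat L) a b
        | Sum.inr (Sum.inr (Sum.inl _)), Sum.inr (Sum.inr (Sum.inr _)) => 0
        | Sum.inr (Sum.inr (Sum.inr a)), Sum.inl b => ((ΛPατ + ΛDατ) * Hmat L) a b
        | Sum.inr (Sum.inr (Sum.inr _)), Sum.inr (Sum.inl _) => 0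
        | Sum.inr (Sum.inr (Sum.inr _)), Sum.inr (Sum.inr (Sum.inl _)) => 0
        | Sum.inr (Sum.inr (Sum.inr a)), Sum.inr (Sum.inr (Sum.inr b)) => (ΛPαα + ΛDαα) a b) := by
  ext i j
  rcases i with a | a | a | a <;> rcases j with b | b | b | b <;>
    simp only [Matrix.mul_apply, Matrix.transpose_apply, JbpskP, IetaP, Matrix.of_apply,
      Fintype.sum_sum_type, Fintype.sum_prod_type, mul_zero, zero_mul, Finset.sum_const_zero,
      add_zero, zero_add, mul_ite, ite_mul, ite_le_eq, Finset.sum_ite_irrel, Finset.sum_ite_eq,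
      Finset.sum_ite_eq', Finset.mem_univ, if_true, ite_self, Matrix.zero_apply]
  all_goals first
    | rfl
    | (simp [Matrix.mul_apply, Matrix.add_apply, Matrix.one_apply, Finset.sum_add_distrib,
        mul_add, add_mul, mul_comm, mul_left_comm]; done)
    | ((first
          | (conv_rhs => rw [← keyC1 P D Tf])
          | (conv_rhs => rw [← keyC2 P D Tf])) <;>
        rw [Finset.sum_mul] <;>
        refine Finset.sum_congr rfl fun x _ => ?_ <;>
        (try split_ifs) <;>
        simp only [Matrix.mul_apply, Matrix.transpose_apply, Finset.sum_mul, Finset.mul_sum,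
          zero_mul, mul_zero, Finset.sum_const_zero] <;>
        (try refine Finset.sum_congr rfl fun y _ => Finset.sum_congr rfl fun z _ => ?_) <;>
        (try ring))
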